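/- Let n, K : ℕ, let S be a Lagrangian F₂-subspace of V = (F₂×F₂)ⁿ, let φ ∈ ℂ^{F₂ⁿ} be a unit vector admitting a function ε : S → ℂ with E(s)·φ = ε(s)·φ for all s ∈ S, and let t : Fin K → V satisfy t_i + t_j ∉ S for all i ≠ j. Then for all i, j : Fin K and all v ∈ V: |⟨E(t_j)·φ, E(v)·E(t_i)·φ⟩|² = 1 if v ∈ t_i + t_j + S (i.e. v + t_i + t_j ∈ S), and |⟨E(t_j)·φ, E(v)·E(t_i)·φ⟩|² = 0 otherwise. -/

import Mathlib

/-!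
Pauli matrices multiply up to sign, `E(v) E(w) = ±E(v + w)` and `E(v)ᴴ = ±E(v)`, so the matrix
element is `±⟨φ, E(w) φ⟩` with `w = v + t_i + t_j`. If `w ∈ S` this is the eigenvalue `ε(w)`,
of modulus one because `E(w)` is unitary. If `w ∉ S`, then, `S` being its own symplectic
orthogonal, some `s ∈ S` has `⟨s, w⟩ = 1`; so `E(s)` anticommutes with `E(w)`, and as `φ` is an
eigenvector of the unitary `E(s)`, `⟨φ, E(w) φ⟩ = -⟨φ, E(w) φ⟩ = 0`.
-/

open Matrix

/-- The Pauli matrix `E(v)` for `v = (a|b) ∈ (F₂×F₂)ⁿ`: the `2ⁿ × 2ⁿ` complex matrix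
with `(x, y)` entry `(-1)^{b·y}` if `x = y + a` and `0` otherwise. -/
def PauliV {n : ℕ} (v : Fin n → ZMod 2 × ZMod 2) :
    Matrix (Fin n → ZMod 2) (Fin n → ZMod 2) ℂ :=
  Matrix.of fun x y =>
    if x = y + (fun k => (v k).1) then (-1 : ℂ) ^ (∑ k, ((v k).2 * y k).val) else 0

/-- The symplectic inner product `⟨v,v'⟩ = Σ_k (a_k b'_k + a'_k b_k) ∈ F₂`. -/
def sympl {n : ℕ} (v v' : Fin n → ZMod 2 × ZMod 2) : ZMod 2 :=
  ∑ k, ((v k).1 * (v' k).2 + (v' k).1 * (v k).2)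

noncomputable def signChar : AddChar (ZMod 2) ℂ where
  toFun m := (-1) ^ m.val
  map_zero_eq_one' := by simp
  map_add_eq_mul' a b := by
    rw [ZMod.val_add, ← pow_add]
    exact (neg_one_pow_eq_pow_mod_two _).symm

lemma signChar_apply (m : ZMod 2) : signChar m = (-1) ^ m.val := rfl

lemma signChar_natCast (N : ℕ) : signChar N = (-1) ^ N := by
  rw [signChar_apply, ZMod.val_natCast, ← neg_one_pow_eq_pow_mod_two]

lemma signChar_one : signChar 1 = -1 := by
  simpa using signChar_natCast 1

lemma signChar_mul_self (m : ZMod 2) : signChar m * signChar m = 1 := by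
  rw [← AddChar.map_add_eq_mul, CharTwo.add_self_eq_zero, AddChar.map_zero_eq_one]

lemma normSq_signChar (m : ZMod 2) : Complex.normSq (signChar m) = 1 := by
  rw [signChar_apply, map_pow, Complex.normSq_neg, Complex.normSq_one, one_pow]

lemma star_signChar (m : ZMod 2) : star (signChar m) = signChar m := by
  rw [signChar_apply, star_pow, star_neg, star_one]

lemma neg_one_pow_sum_val {ι : Type*} (s : Finset ι) (f : ι → ZMod 2) :
    (-1 : ℂ) ^ (∑ k ∈ s, (f k).val) = signChar (∑ k ∈ s, f k) := by
  rw [← signChar_natCast]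
  push_cast [ZMod.natCast_val, ZMod.cast_id]
  rfl

section Pauli

variable {n : ℕ}

def xPart (v : Fin n → ZMod 2 × ZMod 2) : Fin n → ZMod 2 := fun k => (v k).1

def zPart (v : Fin n → ZMod 2 × ZMod 2) : Fin n → ZMod 2 := fun k => (v k).2

@[simp] lemma xPart_add (v w : Fin n → ZMod 2 × ZMod 2) : xPart (v + w) = xPart v + xPart w := rfl
@[simp] lemma zPart_add (v w : Fin n → ZMod 2 × ZMod 2) : zPart (v + w) = zPart v + zPart w := rfl
@[simp] lemma xPart_smul (c : ZMod 2) (v : Fin n → ZMod 2 × ZMod 2) :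
    xPart (c • v) = c • xPart v := rfl
@[simp] lemma zPart_smul (c : ZMod 2) (v : Fin n → ZMod 2 × ZMod 2) :
    zPart (c • v) = c • zPart v := rfl
@[simp] lemma xPart_zero : xPart (0 : Fin n → ZMod 2 × ZMod 2) = 0 := rfl
@[simp] lemma zPart_zero : zPart (0 : Fin n → ZMod 2 × ZMod 2) = 0 := rfl

lemma sympl_eq_dotProduct (v w : Fin n → ZMod 2 × ZMod 2) :
    sympl v w = xPart v ⬝ᵥ zPart w + xPart w ⬝ᵥ zPart v := by
  simp only [sympl, dotProduct, xPart, zPart, Finset.sum_add_distrib]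

lemma PauliV_apply (v : Fin n → ZMod 2 × ZMod 2) (x y : Fin n → ZMod 2) :
    PauliV v x y = if x = y + xPart v then signChar (zPart v ⬝ᵥ y) else 0 := by
  simp only [PauliV, of_apply, neg_one_pow_sum_val]
  rfl

lemma PauliV_zero : PauliV (0 : Fin n → ZMod 2 × ZMod 2) = 1 := by
  ext x y
  simp [PauliV_apply, one_apply]

lemma PauliV_mul (v w : Fin n → ZMod 2 × ZMod 2) :
    PauliV v * PauliV w = signChar (zPart v ⬝ᵥ xPart w) • PauliV (v + w) := by
  ext x y
  rw [mul_apply, Finset.sum_eq_single (y + xPart w) (fun z _ hz => by simp [PauliV_apply, hz])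
    (by simp)]
  have hx : (x = y + xPart w + xPart v) ↔ (x = y + xPart (v + w)) := by
    rw [xPart_add, add_comm (xPart v), add_assoc]
  simp only [PauliV_apply, Matrix.smul_apply, smul_eq_mul, if_true, hx]
  split_ifs
  · rw [zPart_add, dotProduct_add, add_dotProduct]
    simp only [AddChar.map_add_eq_mul]
    ring
  · simp

lemma PauliV_conjTranspose (v : Fin n → ZMod 2 × ZMod 2) :
    (PauliV v)ᴴ = signChar (xPart v ⬝ᵥ zPart v) • PauliV v := by
  ext x y
  have hswap : (y = x + xPart v) ↔ (x = y + xPart v) := by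
    constructor <;> rintro rfl <;> rw [add_assoc, ZModModule.add_self, add_zero]
  simp only [conjTranspose_apply, PauliV_apply, Matrix.smul_apply, smul_eq_mul, hswap]
  split_ifs with h
  · subst h
    rw [star_signChar, dotProduct_add, AddChar.map_add_eq_mul,
      dotProduct_comm (zPart v) (xPart v), mul_comm]
  · simp

lemma PauliV_conjTranspose_mul_self (v : Fin n → ZMod 2 × ZMod 2) :
    (PauliV v)ᴴ * PauliV v = 1 := by
  rw [PauliV_conjTranspose, smul_mul_assoc, PauliV_mul, smul_smul, ← AddChar.map_add_eq_mul,
    dotProduct_comm (zPart v), ZModModule.add_self, ZModModule.add_self, AddChar.map_zero_eq_one,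
    one_smul, PauliV_zero]

lemma PauliV_mul_comm (v w : Fin n → ZMod 2 × ZMod 2) :
    PauliV w * PauliV v = signChar (sympl v w) • (PauliV v * PauliV w) := by
  rw [PauliV_mul, PauliV_mul, smul_smul, ← AddChar.map_add_eq_mul, add_comm w v,
    sympl_eq_dotProduct, dotProduct_comm (xPart v), add_assoc, dotProduct_comm (xPart w),
    ZModModule.add_self, add_zero]

lemma exists_PauliV_conjTranspose_mul_mul (u v w : Fin n → ZMod 2 × ZMod 2) :
    ∃ m : ZMod 2, (PauliV u)ᴴ * PauliV v * PauliV w = signChar m • PauliV (v + w + u) := by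
  refine ⟨xPart u ⬝ᵥ zPart u + zPart v ⬝ᵥ xPart w + zPart u ⬝ᵥ xPart (v + w), ?_⟩
  rw [PauliV_conjTranspose, smul_mul_assoc, smul_mul_assoc, mul_assoc, PauliV_mul,
    mul_smul_comm, PauliV_mul, smul_smul, smul_smul, AddChar.map_add_eq_mul,
    AddChar.map_add_eq_mul, add_comm u]

end Pauli

section Eigenvector

variable {ι : Type*} [Fintype ι]

lemma star_mulVec_dotProduct (M : Matrix ι ι ℂ) (ψ χ : ι → ℂ) :
    star (M *ᵥ ψ) ⬝ᵥ χ = star ψ ⬝ᵥ Mᴴ *ᵥ χ := by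
  rw [star_mulVec, dotProduct_mulVec]

variable [DecidableEq ι] {U A : Matrix ι ι ℂ} {φ : ι → ℂ} {c : ℂ}

lemma star_mul_self_eq_one_of_mulVec_eq_smul (hU : Uᴴ * U = 1) (hφ : star φ ⬝ᵥ φ ≠ 0)
    (hUφ : U *ᵥ φ = c • φ) : star c * c = 1 := by
  have h := star_mulVec_dotProduct U φ (U *ᵥ φ)
  rw [mulVec_mulVec, hU, one_mulVec, hUφ, star_smul, smul_dotProduct, dotProduct_smul,
    smul_smul, smul_eq_mul] at h
  exact mul_right_cancel₀ hφ (by rw [h, one_mul])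

lemma dotProduct_mulVec_eq_zero_of_anticommute (hU : Uᴴ * U = 1) (hφ : star φ ⬝ᵥ φ ≠ 0)
    (hUφ : U *ᵥ φ = c • φ) (hAU : A * U = -(U * A)) : star φ ⬝ᵥ A *ᵥ φ = 0 := by
  have hc := star_mul_self_eq_one_of_mulVec_eq_smul hU hφ hUφ
  have hUφ' : Uᴴ *ᵥ φ = star c • φ := by
    conv_lhs => rw [← one_smul ℂ φ, ← hc, mul_smul, ← hUφ, mulVec_smul, mulVec_mulVec, hU,
      one_mulVec]
  have hAUφ : star φ ⬝ᵥ (A * U) *ᵥ φ = c * (star φ ⬝ᵥ A *ᵥ φ) := by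
    rw [← mulVec_mulVec, hUφ, mulVec_smul, dotProduct_smul, smul_eq_mul]
  have hUAφ : star φ ⬝ᵥ (U * A) *ᵥ φ = c * (star φ ⬝ᵥ A *ᵥ φ) := by
    rw [← mulVec_mulVec, ← conjTranspose_conjTranspose U, ← star_mulVec_dotProduct, hUφ',
      star_smul, star_star, smul_dotProduct, smul_eq_mul]
  have hc0 : c ≠ 0 := right_ne_zero_of_mul_eq_one hc
  rw [hAU, neg_mulVec, dotProduct_neg, hUAφ, neg_eq_iff_add_eq_zero, ← two_mul] at hAUφ
  simpa [hc0] using hAUφ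

end Eigenvector

section Lagrangian

variable {n : ℕ}

def symplForm (n : ℕ) : LinearMap.BilinForm (ZMod 2) (Fin n → ZMod 2 × ZMod 2) :=
  LinearMap.mk₂ (ZMod 2) sympl
    (fun _ _ _ => by simp only [sympl_eq_dotProduct, xPart_add, zPart_add, add_dotProduct,
      dotProduct_add]; ring)
    (fun _ _ _ => by simp only [sympl_eq_dotProduct, xPart_smul, zPart_smul, smul_dotProduct,
      dotProduct_smul, smul_eq_mul]; ring)
    (fun _ _ _ => by simp only [sympl_eq_dotProduct, xPart_add, zPart_add, add_dotProduct,
      dotProduct_add]; ring)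
    (fun _ _ _ => by simp only [sympl_eq_dotProduct, xPart_smul, zPart_smul, smul_dotProduct,
      dotProduct_smul, smul_eq_mul]; ring)

lemma symplForm_apply (v w : Fin n → ZMod 2 × ZMod 2) : symplForm n v w = sympl v w := rfl

lemma sympl_comm (v w : Fin n → ZMod 2 × ZMod 2) : sympl v w = sympl w v := by
  rw [sympl_eq_dotProduct, sympl_eq_dotProduct, add_comm]

lemma symplForm_isRefl : (symplForm n).IsRefl := fun v w h => by
  rwa [symplForm_apply, sympl_comm] at h

lemma symplForm_nondegenerate : (symplForm n).Nondegenerate := by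
  refine (LinearMap.IsRefl.nondegenerate_iff_separatingLeft symplForm_isRefl).mpr fun v hv => ?_
  ext k
  · simpa [symplForm_apply, sympl, Pi.single_apply, apply_ite Prod.fst, apply_ite Prod.snd]
      using hv (Pi.single k (0, 1))
  · simpa [symplForm_apply, sympl, Pi.single_apply, apply_ite Prod.fst, apply_ite Prod.snd]
      using hv (Pi.single k (1, 0))

lemma finrank_symplecticSpace :
    Module.finrank (ZMod 2) (Fin n → ZMod 2 × ZMod 2) = 2 * n := by
  simp [Module.finrank_pi_fintype, Module.finrank_prod]
  ring

lemma eq_orthogonal_of_isotropic_of_finrank {S : Submodule (ZMod 2) (Fin n → ZMod 2 × ZMod 2)}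
    (hiso : ∀ s ∈ S, ∀ s' ∈ S, sympl s s' = 0) (hdim : Module.finrank (ZMod 2) S = n) :
    S = (symplForm n).orthogonal S := by
  refine Submodule.eq_of_le_of_finrank_le
    (fun s hs => LinearMap.BilinForm.mem_orthogonal_iff.mpr fun s' hs' => hiso s' hs' s hs) ?_
  rw [LinearMap.BilinForm.finrank_orthogonal symplForm_nondegenerate, finrank_symplecticSpace,
    hdim]
  omega

lemma exists_sympl_eq_one_of_not_mem {S : Submodule (ZMod 2) (Fin n → ZMod 2 × ZMod 2)}
    (hiso : ∀ s ∈ S, ∀ s' ∈ S, sympl s s' = 0) (hdim : Module.finrank (ZMod 2) S = n)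
    {w : Fin n → ZMod 2 × ZMod 2} (hw : w ∉ S) : ∃ s ∈ S, sympl s w = 1 := by
  by_contra! h
  have h01 : ∀ z : ZMod 2, z ≠ 1 → z = 0 := by decide
  rw [eq_orthogonal_of_isotropic_of_finrank hiso hdim] at hw
  exact hw (LinearMap.BilinForm.mem_orthogonal_iff.mpr fun s hs => h01 _ (h s hs))

end Lagrangian

section Stabilizer

variable {n : ℕ} {S : Submodule (ZMod 2) (Fin n → ZMod 2 × ZMod 2)} {φ : (Fin n → ZMod 2) → ℂ}
  {ε : S → ℂ}

lemma normSq_expectation_PauliV_of_mem (hunit : star φ ⬝ᵥ φ = 1)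
    (hε : ∀ s : S, PauliV (s : Fin n → ZMod 2 × ZMod 2) *ᵥ φ = ε s • φ)
    {w : Fin n → ZMod 2 × ZMod 2} (hw : w ∈ S) :
    Complex.normSq (star φ ⬝ᵥ PauliV w *ᵥ φ) = 1 := by
  have hε_unit := star_mul_self_eq_one_of_mulVec_eq_smul (PauliV_conjTranspose_mul_self w)
    (hunit ▸ one_ne_zero) (hε ⟨w, hw⟩)
  rw [hε ⟨w, hw⟩, dotProduct_smul, hunit, smul_eq_mul, mul_one]
  exact_mod_cast Complex.normSq_eq_conj_mul_self.trans hε_unit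

lemma expectation_PauliV_eq_zero_of_not_mem (hiso : ∀ s ∈ S, ∀ s' ∈ S, sympl s s' = 0)
    (hdim : Module.finrank (ZMod 2) S = n) (hunit : star φ ⬝ᵥ φ = 1)
    (hε : ∀ s : S, PauliV (s : Fin n → ZMod 2 × ZMod 2) *ᵥ φ = ε s • φ)
    {w : Fin n → ZMod 2 × ZMod 2} (hw : w ∉ S) :
    star φ ⬝ᵥ PauliV w *ᵥ φ = 0 := by
  obtain ⟨s, hs, hsw⟩ := exists_sympl_eq_one_of_not_mem hiso hdim hw
  refine dotProduct_mulVec_eq_zero_of_anticommute (PauliV_conjTranspose_mul_self s)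
    (hunit ▸ one_ne_zero) (hε ⟨s, hs⟩) ?_
  rw [PauliV_mul_comm s w, hsw, signChar_one, neg_one_smul]

end Stabilizer

open scoped Classical

theorem cws_matrix_element_general {n K : ℕ}
    (S : Submodule (ZMod 2) (Fin n → ZMod 2 × ZMod 2))
    (hiso : ∀ s ∈ S, ∀ s' ∈ S, sympl s s' = 0)
    (hdim : Module.finrank (ZMod 2) S = n)
    (φ : (Fin n → ZMod 2) → ℂ) (hunit : ∑ x, star (φ x) * φ x = 1)
    (ε : S → ℂ) (hε : ∀ s : S, (PauliV (s : Fin n → ZMod 2 × ZMod 2)).mulVec φ = ε s • φ)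
    (t : Fin K → (Fin n → ZMod 2 × ZMod 2)) :
    ∀ (i j : Fin K) (v : Fin n → ZMod 2 × ZMod 2),
      Complex.normSq
          (∑ x, star ((PauliV (t j)).mulVec φ x) *
            (PauliV v).mulVec ((PauliV (t i)).mulVec φ) x) =
        if v + t i + t j ∈ S then 1 else 0 := by
  intro i j v
  obtain ⟨m, hm⟩ := exists_PauliV_conjTranspose_mul_mul (t j) v (t i)
  change Complex.normSq (star (PauliV (t j) *ᵥ φ) ⬝ᵥ PauliV v *ᵥ PauliV (t i) *ᵥ φ) = _
  rw [star_mulVec_dotProduct, mulVec_mulVec, mulVec_mulVec, hm, smul_mulVec,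
    dotProduct_smul, smul_eq_mul, Complex.normSq_mul, normSq_signChar, one_mul]
  split_ifs with hw
  · exact normSq_expectation_PauliV_of_mem hunit hε hw
  · rw [expectation_PauliV_eq_zero_of_not_mem hiso hdim hunit hε hw, map_zero]

/-- For a CWS code, `|⟨E(t_j)·φ, E(v)·E(t_i)·φ⟩|² = 1` if `v + t_i + t_j ∈ S`
and `0` otherwise. -/
theorem cws_matrix_element {n K : ℕ}
    (S : Submodule (ZMod 2) (Fin n → ZMod 2 × ZMod 2))
    (hiso : ∀ s ∈ S, ∀ s' ∈ S, sympl s s' = 0)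
    (hdim : Module.finrank (ZMod 2) S = n)
    (φ : (Fin n → ZMod 2) → ℂ) (hunit : ∑ x, star (φ x) * φ x = 1)
    (ε : S → ℂ) (hε : ∀ s : S, (PauliV (s : Fin n → ZMod 2 × ZMod 2)).mulVec φ = ε s • φ)
    (t : Fin K → (Fin n → ZMod 2 × ZMod 2))
    (ht : ∀ i j, i ≠ j → t i + t j ∉ S) :
    ∀ (i j : Fin K) (v : Fin n → ZMod 2 × ZMod 2),
      Complex.normSq
          (∑ x, star ((PauliV (t j)).mulVec φ x) *
            (PauliV v).mulVec ((PauliV (t i)).mulVec φ) x) =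
        if v + t i + t j ∈ S then 1 else 0 :=
  cws_matrix_element_general S hiso hdim φ hunit ε hε t
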